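/- arXiv:2112.10726 — 4 statements merged into one kernel-verified Lean document; each statement's English description precedes it below -/
import Mathlib

section
/- Let X be a reflexive Banach space and F ∈ C¹(X) strictly convex with F' strongly monotone and coercive: there is a non-decreasing function α : [0,∞) → [0,∞) vanishing only at 0 with α(r) → ∞ as r → ∞ such that ⟨F'(v) − F'(w), v − w⟩ ≥ α(‖v−w‖)‖v−w‖ for all v, w ∈ X. Then F' is a homeomorphism of X onto X*. -/
/-!
Strong monotonicity gives `α ‖v - w‖ ≤ ‖F' v - F' w‖`, so `F'` is injective with a uniformly
continuous inverse. For surjectivity onto `f`, note that `F - f` has derivative `F' - f`, with the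
same modulus. Applying the mean value theorem on the two halves of a segment yields the growth
estimate `F y + F' y (x - y) + α (‖x - y‖ / 2) * (‖x - y‖ / 2) ≤ F x`. It makes `F - f` bounded
below, and through the midpoint inequality it makes every minimizing sequence Cauchy. The limit is a
minimizer, where `F' = f`.
-/

open Filter Topology

section MonotoneGradient

variable {X : Type*} [NormedAddCommGroup X] [NormedSpace ℝ X]
  {G : X → ℝ} {G' : X → StrongDual ℝ X}

lemma add_fderiv_le_of_monotone (hG : ∀ x, HasFDerivAt G (G' x) x)
    (hmono : ∀ v w, 0 ≤ (G' v - G' w) (v - w)) (x y : X) :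
    G y + G' y (x - y) ≤ G x := by
  set d := x - y
  have hline : ∀ t : ℝ, HasDerivAt (fun t : ℝ => G (y + t • d)) (G' (y + t • d) d) t :=
    fun t => (hG _).comp_hasDerivAt t (by simpa using ((hasDerivAt_id t).smul_const d).const_add y)
  obtain ⟨c, ⟨hc0, -⟩, hc⟩ := exists_hasDerivAt_eq_slope (fun t : ℝ => G (y + t • d)) _
    zero_lt_one (fun t _ => (hline t).continuousAt.continuousWithinAt) (fun t _ => hline t)
  have hdc : 0 ≤ c * (G' (y + c • d) d - G' y d) := by
    simpa [mul_sub] using hmono (y + c • d) y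
  have hslope : G' y d ≤ G' (y + c • d) d := sub_nonneg.1 (nonneg_of_mul_nonneg_right hdc hc0)
  simp only [zero_smul, add_zero, one_smul, sub_zero, div_one, d, add_sub_cancel] at hc
  linarith

lemma add_fderiv_add_modulus_le (hG : ∀ x, HasFDerivAt G (G' x) x) {α : ℝ → ℝ}
    (hα0 : ∀ r, 0 ≤ r → 0 ≤ α r)
    (hstrong : ∀ v w : X, α ‖v - w‖ * ‖v - w‖ ≤ (G' v - G' w) (v - w)) (x y : X) :
    G y + G' y (x - y) + α (‖x - y‖ / 2) * (‖x - y‖ / 2) ≤ G x := by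
  have hmono : ∀ v w, 0 ≤ (G' v - G' w) (v - w) := fun v w =>
    (mul_nonneg (hα0 _ (norm_nonneg _)) (norm_nonneg _)).trans (hstrong v w)
  set m := midpoint ℝ y x
  have hxm : x - m = (2⁻¹ : ℝ) • (x - y) := by simp [m, right_sub_midpoint]
  have hmy : m - y = (2⁻¹ : ℝ) • (x - y) := by simp [m, midpoint_sub_left]
  have hnorm : ‖m - y‖ = ‖x - y‖ / 2 := by simp [hmy, norm_smul, div_eq_inv_mul]
  -- tangent inequalities on `[y, m]` and `[m, x]`, plus the monotonicity gain between `y` and `m`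
  have hleft := add_fderiv_le_of_monotone hG hmono m y
  have hright := add_fderiv_le_of_monotone hG hmono x m
  have hgain := hstrong m y
  rw [hnorm, hmy] at hgain
  rw [hmy] at hleft
  rw [hxm] at hright
  simp only [map_smul, sub_apply, smul_eq_mul] at hleft hright hgain
  linarith

lemma two_mul_midpoint_add_modulus_le (hG : ∀ x, HasFDerivAt G (G' x) x) {α : ℝ → ℝ}
    (hα0 : ∀ r, 0 ≤ r → 0 ≤ α r)
    (hstrong : ∀ v w : X, α ‖v - w‖ * ‖v - w‖ ≤ (G' v - G' w) (v - w)) (p q : X) :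
    2 * G (midpoint ℝ p q) + α (‖p - q‖ / 4) * (‖p - q‖ / 2) ≤ G p + G q := by
  set w := midpoint ℝ p q
  have hp := add_fderiv_add_modulus_le hG hα0 hstrong p w
  have hq := add_fderiv_add_modulus_le hG hα0 hstrong q w
  have hpw : p - w = (2⁻¹ : ℝ) • (p - q) := by simp [w, left_sub_midpoint]
  have hqw : q - w = -((2⁻¹ : ℝ) • (p - q)) := by
    rw [← smul_neg, neg_sub]; simp [w, right_sub_midpoint]
  have hquarter : ‖(2⁻¹ : ℝ) • (p - q)‖ / 2 = ‖p - q‖ / 4 := by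
    rw [norm_smul]; norm_num; ring
  rw [hpw] at hp
  rw [hqw, norm_neg] at hq
  simp only [hquarter, map_neg, map_smul, smul_eq_mul] at hp hq
  linarith

lemma bddBelow_range_of_modulus (hG : ∀ x, HasFDerivAt G (G' x) x) {α : ℝ → ℝ}
    (hα0 : ∀ r, 0 ≤ r → 0 ≤ α r) (hαtop : Tendsto α atTop atTop)
    (hstrong : ∀ v w : X, α ‖v - w‖ * ‖v - w‖ ≤ (G' v - G' w) (v - w)) :
    BddBelow (Set.range G) := by
  set c := ‖G' 0‖
  obtain ⟨R, hR⟩ := eventually_atTop.1 (hαtop.eventually_ge_atTop (2 * c))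
  set R' := max (2 * R) 0
  refine ⟨G 0 - c * R', Set.forall_mem_range.2 fun z => ?_⟩
  have hz := add_fderiv_add_modulus_le hG hα0 hstrong z 0
  rw [sub_zero] at hz
  have hlin : -(c * ‖z‖) ≤ G' 0 z := neg_le_of_abs_le ((G' 0).le_opNorm z)
  rcases le_or_gt ‖z‖ R' with hsmall | hlarge
  · have hgain : 0 ≤ α (‖z‖ / 2) * (‖z‖ / 2) := mul_nonneg (hα0 _ (by positivity)) (by positivity)
    linarith [mul_le_mul_of_nonneg_left hsmall (norm_nonneg (G' 0))]
  · have hαz : 2 * c ≤ α (‖z‖ / 2) := hR _ (by linarith [le_max_left (2 * R) 0])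
    linarith [mul_le_mul_of_nonneg_right hαz (by positivity : 0 ≤ ‖z‖ / 2),
      mul_nonneg (norm_nonneg (G' 0)) (le_max_right (2 * R) 0)]

lemma cauchySeq_of_minimizing (hG : ∀ x, HasFDerivAt G (G' x) x) {α : ℝ → ℝ}
    (hα0 : ∀ r, 0 ≤ r → 0 ≤ α r) (hαmono : ∀ r s, 0 ≤ r → r ≤ s → α r ≤ α s)
    (hαpos : ∀ r, 0 < r → 0 < α r)
    (hstrong : ∀ v w : X, α ‖v - w‖ * ‖v - w‖ ≤ (G' v - G' w) (v - w))
    {m : ℝ} (hm : ∀ y, m ≤ G y) {u : ℕ → X} (hu : Tendsto (fun n => G (u n)) atTop (𝓝 m)) :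
    CauchySeq u := by
  refine Metric.cauchySeq_iff'.2 fun ε hε => ?_
  set c := α (ε / 4) * (ε / 2)
  have hc : 0 < c := mul_pos (hαpos _ (by positivity)) (by positivity)
  obtain ⟨N, hN⟩ := eventually_atTop.1 (hu.eventually (gt_mem_nhds (by linarith : m < m + c / 2)))
  refine ⟨N, fun n hn => lt_of_not_ge fun hfar => ?_⟩
  rw [dist_eq_norm] at hfar
  have hmid := two_mul_midpoint_add_modulus_le hG hα0 hstrong (u n) (u N)
  have hgain : c ≤ α (‖u n - u N‖ / 4) * (‖u n - u N‖ / 2) :=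
    mul_le_mul (hαmono _ _ (by positivity) (by linarith)) (by linarith) (by positivity)
      (hα0 _ (by positivity))
  linarith [hm (midpoint ℝ (u n) (u N)), hN n hn, hN N le_rfl]

lemma exists_forall_le_of_modulus [CompleteSpace X] (hG : ∀ x, HasFDerivAt G (G' x) x)
    {α : ℝ → ℝ} (hα0 : ∀ r, 0 ≤ r → 0 ≤ α r) (hαmono : ∀ r s, 0 ≤ r → r ≤ s → α r ≤ α s)
    (hαpos : ∀ r, 0 < r → 0 < α r) (hαtop : Tendsto α atTop atTop)
    (hstrong : ∀ v w : X, α ‖v - w‖ * ‖v - w‖ ≤ (G' v - G' w) (v - w)) :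
    ∃ z, ∀ y, G z ≤ G y := by
  have hbdd := bddBelow_range_of_modulus hG hα0 hαtop hstrong
  have hm : ∀ y, sInf (Set.range G) ≤ G y := fun y => csInf_le hbdd ⟨y, rfl⟩
  obtain ⟨s, -, hs, hsG⟩ := exists_seq_tendsto_sInf (Set.range_nonempty G) hbdd
  choose u hu using hsG
  have hGu : Tendsto (fun n => G (u n)) atTop (𝓝 (sInf (Set.range G))) := by
    simpa only [hu] using hs
  obtain ⟨z, hz⟩ := cauchySeq_tendsto_of_complete
    (cauchySeq_of_minimizing hG hα0 hαmono hαpos hstrong hm hGu)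
  have hGcont : Continuous G := continuous_iff_continuousAt.2 fun x => (hG x).continuousAt
  have hGz : G z = sInf (Set.range G) := tendsto_nhds_unique ((hGcont.tendsto z).comp hz) hGu
  exact ⟨z, hGz ▸ hm⟩

lemma surjective_of_modulus [CompleteSpace X] (hG : ∀ x, HasFDerivAt G (G' x) x)
    {α : ℝ → ℝ} (hα0 : ∀ r, 0 ≤ r → 0 ≤ α r) (hαmono : ∀ r s, 0 ≤ r → r ≤ s → α r ≤ α s)
    (hαpos : ∀ r, 0 < r → 0 < α r) (hαtop : Tendsto α atTop atTop)
    (hstrong : ∀ v w : X, α ‖v - w‖ * ‖v - w‖ ≤ (G' v - G' w) (v - w)) :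
    Function.Surjective G' := by
  intro f
  have hshift : ∀ v w : X, α ‖v - w‖ * ‖v - w‖ ≤ ((G' v - f) - (G' w - f)) (v - w) := by
    simpa only [sub_sub_sub_cancel_right] using hstrong
  obtain ⟨z, hz⟩ := exists_forall_le_of_modulus (fun x => (hG x).sub f.hasFDerivAt)
    hα0 hαmono hαpos hαtop hshift
  have hmin : IsLocalMin (fun x => G x - f x) z := Eventually.of_forall hz
  exact ⟨z, sub_eq_zero.1 (hmin.hasFDerivAt_eq_zero ((hG z).sub f.hasFDerivAt))⟩

lemma modulus_le_norm_sub {α : ℝ → ℝ} (hα00 : α 0 = 0)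
    (hstrong : ∀ v w : X, α ‖v - w‖ * ‖v - w‖ ≤ (G' v - G' w) (v - w)) (v w : X) :
    α ‖v - w‖ ≤ ‖G' v - G' w‖ := by
  rcases eq_or_ne v w with rfl | hne
  · simp [hα00]
  have hpos : 0 < ‖v - w‖ := norm_pos_iff.2 (sub_ne_zero.2 hne)
  refine le_of_mul_le_mul_right ((hstrong v w).trans ?_) hpos
  exact (le_abs_self _).trans ((G' v - G' w).le_opNorm (v - w))

end MonotoneGradient

section Modulus

variable {Y Z : Type*} [MetricSpace Y] [PseudoMetricSpace Z] {α : ℝ → ℝ}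

lemma injective_of_modulus (hαpos : ∀ r, 0 < r → 0 < α r) {f : Y → Z}
    (hf : ∀ x y, α (dist x y) ≤ dist (f x) (f y)) : Function.Injective f := by
  intro x y hxy
  by_contra hne
  have := hf x y
  rw [hxy, dist_self] at this
  exact (hαpos _ (dist_pos.2 hne)).not_ge this

lemma uniformContinuous_of_modulus (hαpos : ∀ r, 0 < r → 0 < α r)
    (hαmono : ∀ r s, 0 ≤ r → r ≤ s → α r ≤ α s) {f : Y → Z} {g : Z → Y}
    (hf : ∀ x y, α (dist x y) ≤ dist (f x) (f y)) (hfg : Function.RightInverse g f) :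
    UniformContinuous g :=
  Metric.uniformContinuous_iff.2 fun ε hε => ⟨α ε, hαpos ε hε, fun {a b} hab => by
    by_contra! hfar
    have := (hαmono _ _ hε.le hfar).trans (hf (g a) (g b))
    rw [hfg a, hfg b] at this
    linarith⟩

end Modulus

theorem statement3_general
    (X : Type*) [NormedAddCommGroup X] [NormedSpace ℝ X] [CompleteSpace X]
    (F : X → ℝ) (F' : X → StrongDual ℝ X)
    (hdiff : ∀ x, HasFDerivAt F (F' x) x) (hcont : Continuous F')
    (α : ℝ → ℝ)
    (hα0 : ∀ r, 0 ≤ r → 0 ≤ α r)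
    (hαmono : ∀ r s, 0 ≤ r → r ≤ s → α r ≤ α s)
    (hαzero : ∀ r, 0 ≤ r → (α r = 0 ↔ r = 0))
    (hαtop : Filter.Tendsto α Filter.atTop Filter.atTop)
    (hstrong : ∀ v w : X, α ‖v - w‖ * ‖v - w‖ ≤ (F' v - F' w) (v - w)) :
    IsHomeomorph F' := by
  have hαpos : ∀ r, 0 < r → 0 < α r := fun r hr =>
    (hα0 r hr.le).lt_of_ne' fun h => hr.ne' ((hαzero r hr.le).1 h)
  have hlower : ∀ v w, α (dist v w) ≤ dist (F' v) (F' w) := by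
    simpa only [dist_eq_norm] using modulus_le_norm_sub ((hαzero 0 le_rfl).2 rfl) hstrong
  let e := Equiv.ofBijective F'
    ⟨injective_of_modulus hαpos hlower, surjective_of_modulus hdiff hα0 hαmono hαpos hαtop hstrong⟩
  exact e.isHomeomorph_iff.2
    ⟨hcont, (uniformContinuous_of_modulus hαpos hαmono hlower e.right_inv).continuous⟩

/-- Let `X` be a reflexive Banach space and `F ∈ C¹(X)` strictly convex
with `F'` strongly monotone and coercive: there is a non-decreasing `α : [0,∞) → [0,∞)`
vanishing only at `0` with `α(r) → ∞` as `r → ∞` such that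
`⟨F'(v) − F'(w), v − w⟩ ≥ α(‖v−w‖)‖v−w‖` for all `v, w`.  Then `F'` is a homeomorphism
of `X` onto `X*`. -/
theorem statement3
    (X : Type*) [NormedAddCommGroup X] [NormedSpace ℝ X] [CompleteSpace X]
    (hrefl : Function.Bijective (NormedSpace.inclusionInDoubleDual ℝ X))
    (F : X → ℝ) (F' : X → StrongDual ℝ X)
    (hdiff : ∀ x, HasFDerivAt F (F' x) x) (hcont : Continuous F')
    (hstrict : ∀ v w : X, v ≠ w → 0 < (F' v - F' w) (v - w))
    (α : ℝ → ℝ)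
    (hα0 : ∀ r, 0 ≤ r → 0 ≤ α r)
    (hαmono : ∀ r s, 0 ≤ r → r ≤ s → α r ≤ α s)
    (hαzero : ∀ r, 0 ≤ r → (α r = 0 ↔ r = 0))
    (hαtop : Filter.Tendsto α Filter.atTop Filter.atTop)
    (hstrong : ∀ v w : X, α ‖v - w‖ * ‖v - w‖ ≤ (F' v - F' w) (v - w)) :
    IsHomeomorph F' :=
  statement3_general X F F' hdiff hcont α hα0 hαmono hαzero hαtop hstrong
end

section
/- Let H : [0,τ] × ℝ^{2n} → ℝ be measurable in t, twice continuously differentiable in ξ for a.e. t, and suppose there exist constants 0 < C₁ < C₂ such that C₁|η|² ≤ (H''_t(ξ)η, η) ≤ C₂|η|² for a.e. t and all ξ, η ∈ ℝ^{2n}. Then for a.e. t the Fenchel conjugate H*_t = H(t,·)* is twice differentiable and its Hessian satisfies C₂⁻¹|η|² ≤ ((H*_t)''(ξ*)η, η) ≤ C₁⁻¹|η|² for all ξ* and η, where at ξ* = ∇H_t(ξ) one has (H*_t)''(ξ*) = (H''_t(ξ))⁻¹. -/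
/-!
The lower Hessian bound makes `∇H` strongly monotone, `C₁ ‖x - y‖² ≤ ⟪∇H x - ∇H y, x - y⟫`, and
gives `H` quadratic growth. Hence `∇H` is injective with a Lipschitz inverse, and surjective,
since the coercive function `H - ⟪ξ, ·⟫` has a minimiser, where `∇H = ξ`. So `∇H` is a
homeomorphism whose inverse `G` is `C¹` with `G' ξ = H''(G ξ)⁻¹`. The supremum defining `H* ξ`
is attained at `G ξ`, and differentiating `H* ξ = ⟪ξ, G ξ⟫ - H (G ξ)` gives `∇H* = G`, so
`H*` is `C²` with Hessian `H''(G ξ)⁻¹`. The bounds on `A⁻¹` for `A = H''(G ξ)` come from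
Cauchy–Schwarz, for `⟪·, ·⟫` (upper bound) and for the form `⟪A ·, ·⟫` (lower bound).
-/

open MeasureTheory InnerProductSpace RealInnerProductSpace

variable {E : Type*} [NormedAddCommGroup E] [InnerProductSpace ℝ E]

namespace ContinuousLinearMap

theorem IsPositive.inner_apply_sq_le {A : E →L[ℝ] E} (hA : A.IsPositive) (x y : E) :
    ⟪A x, y⟫ ^ 2 ≤ ⟪A x, x⟫ * ⟪A y, y⟫ := by
  have hquad : ∀ t : ℝ, 0 ≤ ⟪A y, y⟫ * (t * t) + 2 * ⟪A x, y⟫ * t + ⟪A x, x⟫ := by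
    intro t
    have h := hA.inner_nonneg_left (t • y + x)
    simp only [map_add, map_smul, inner_add_left, inner_add_right, real_inner_smul_left,
      real_inner_smul_right, hA.inner_left_eq_inner_right y x, real_inner_comm (A x) y] at h
    linarith
  have := discrim_le_zero hquad
  rw [discrim] at this
  nlinarith

theorem injective_of_coercive {A : E →L[ℝ] E} {C : ℝ} (hC : 0 < C)
    (hA : ∀ u, C * ‖u‖ ^ 2 ≤ ⟪A u, u⟫) : Function.Injective A := by
  refine (injective_iff_map_eq_zero A).2 fun u hu => ?_
  have := hA u
  rw [hu, inner_zero_left] at this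
  exact norm_eq_zero.1 (pow_eq_zero_iff two_ne_zero |>.1 (le_antisymm
    (nonpos_of_mul_nonpos_right this hC) (by positivity)))

section FiniteDimensional

variable [FiniteDimensional ℝ E]

noncomputable def equivOfCoercive (A : E →L[ℝ] E) {C : ℝ} (hC : 0 < C)
    (hA : ∀ u, C * ‖u‖ ^ 2 ≤ ⟪A u, u⟫) : E ≃L[ℝ] E :=
  (LinearEquiv.ofInjectiveEndo A.toLinearMap (injective_of_coercive hC hA)).toContinuousLinearEquiv

@[simp]
theorem coe_equivOfCoercive (A : E →L[ℝ] E) {C : ℝ} (hC : 0 < C)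
    (hA : ∀ u, C * ‖u‖ ^ 2 ≤ ⟪A u, u⟫) : (A.equivOfCoercive hC hA : E →L[ℝ] E) = A :=
  rfl

end FiniteDimensional

end ContinuousLinearMap

namespace ContinuousLinearEquiv

theorem inner_symm_apply_le (e : E ≃L[ℝ] E) {C : ℝ} (hC : 0 < C)
    (he : ∀ u, C * ‖u‖ ^ 2 ≤ ⟪e u, u⟫) (η : E) : ⟪e.symm η, η⟫ ≤ C⁻¹ * ‖η‖ ^ 2 := by
  set ζ := e.symm η
  have hζ : C * ‖ζ‖ ^ 2 ≤ ⟪ζ, η⟫ := by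
    simpa [ζ, real_inner_comm] using he ζ
  have hCS : ⟪ζ, η⟫ ≤ ‖ζ‖ * ‖η‖ := real_inner_le_norm ζ η
  rw [inv_mul_eq_div, le_div_iff₀ hC]
  nlinarith [norm_nonneg ζ, norm_nonneg η, sq_nonneg (C * ‖ζ‖ - ‖η‖)]

theorem inv_mul_le_inner_symm_apply (e : E ≃L[ℝ] E) (he : (e : E →L[ℝ] E).IsPositive) {C : ℝ}
    (he' : ∀ u, ⟪e u, u⟫ ≤ C * ‖u‖ ^ 2) (η : E) : C⁻¹ * ‖η‖ ^ 2 ≤ ⟪e.symm η, η⟫ := by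
  set ζ := e.symm η
  have hη : e ζ = η := e.apply_symm_apply η
  have hpos : 0 ≤ ⟪ζ, η⟫ := by simpa [hη, real_inner_comm] using he.inner_nonneg_left ζ
  rcases (sq_nonneg ‖η‖).eq_or_lt with h0 | h0
  · rw [← h0, mul_zero]; exact hpos
  -- Cauchy–Schwarz for the form `⟪e ·, ·⟫`: `‖η‖⁴ ≤ ⟪ζ, η⟫ ⟪e η, η⟫ ≤ C ⟪ζ, η⟫ ‖η‖²`.
  have hCS := he.inner_apply_sq_le ζ η
  simp only [coe_coe, hη, real_inner_self_eq_norm_sq, real_inner_comm ζ η] at hCS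
  have key : ‖η‖ ^ 2 ≤ C * ⟪ζ, η⟫ := le_of_mul_le_mul_left
    (by nlinarith [mul_le_mul_of_nonneg_left (he' η) hpos]) h0
  have hC : 0 < C := pos_of_mul_pos_left (h0.trans_le key) hpos
  rwa [inv_mul_le_iff₀ hC]

end ContinuousLinearEquiv

/-- Junk value: `⨆` over `ℝ` is `0` when the family is unbounded above. For the strongly convex
functions considered here the supremum is attained. -/
noncomputable def fenchelConjugate (f : E → ℝ) (ξ : E) : ℝ := ⨆ η, ⟪ξ, η⟫ - f η

theorem fenchelConjugate_eq_of_le {f : E → ℝ} {ξ x : E} (h : ∀ η, f x + ⟪ξ, η - x⟫ ≤ f η) :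
    fenchelConjugate f ξ = ⟪ξ, x⟫ - f x := by
  have hle (η : E) : ⟪ξ, η⟫ - f η ≤ ⟪ξ, x⟫ - f x := by
    have := h η
    rw [inner_sub_right] at this
    linarith
  exact le_antisymm (ciSup_le hle) (le_ciSup ⟨_, Set.forall_mem_range.2 hle⟩ x)

theorem HasFDerivAt.hasDerivAt_comp_add_smul {F : Type*} [NormedAddCommGroup F]
    [NormedSpace ℝ F] {g : E → F} {L : E →L[ℝ] F} {x v : E} {s : ℝ}
    (hg : HasFDerivAt g L (x + s • v)) : HasDerivAt (fun s : ℝ => g (x + s • v)) (L v) s := by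
  simpa [Function.comp_def] using
    hg.comp_hasDerivAt s (((hasDerivAt_id s).smul_const v).const_add x)

section Gradient

variable [CompleteSpace E] {f : E → ℝ}

theorem HasGradientAt.hasGradientAt_inner_self_sub_comp {G : E → E} {G' : E →L[ℝ] E} {ξ : E}
    (hf : HasGradientAt f ξ (G ξ)) (hG : HasFDerivAt G G' ξ) :
    HasGradientAt (fun ζ => ⟪ζ, G ζ⟫ - f (G ζ)) (G ξ) ξ := by
  refine hasGradientAt_iff_hasFDerivAt.2 (((hasFDerivAt_id ξ).inner ℝ hG).sub
    (hf.hasFDerivAt.comp ξ hG) |>.congr_fderiv ?_)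
  ext v
  simp [real_inner_comm]

theorem ContDiff.contDiff_gradient (hf : ContDiff ℝ 2 f) : ContDiff ℝ 1 (gradient f) :=
  (toDual ℝ E).symm.contDiff.comp (hf.fderiv_right (by norm_num))

theorem ContDiff.mul_norm_sq_le_inner_gradient_sub (hf : ContDiff ℝ 2 f) {C : ℝ}
    (hH : ∀ x u, C * ‖u‖ ^ 2 ≤ ⟪fderiv ℝ (gradient f) x u, u⟫) (x y : E) :
    C * ‖x - y‖ ^ 2 ≤ ⟪gradient f x - gradient f y, x - y⟫ := by
  set v := x - y
  have hderiv (s : ℝ) : HasDerivAt (fun s : ℝ => ⟪v, gradient f (y + s • v)⟫)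
      ⟪v, fderiv ℝ (gradient f) (y + s • v) v⟫ s :=
    ((innerSL ℝ v).hasFDerivAt.comp _
      ((hf.contDiff_gradient.differentiable one_ne_zero) _).hasFDerivAt).hasDerivAt_comp_add_smul
  have := mul_sub_le_image_sub_of_le_deriv (fun s => (hderiv s).differentiableAt)
    (fun s => by rw [(hderiv s).deriv, real_inner_comm]; exact hH _ v) zero_le_one
  simpa [v, inner_sub_left, real_inner_comm] using this

theorem ContDiff.add_inner_gradient_add_le (hf : ContDiff ℝ 2 f) {C : ℝ}
    (hH : ∀ x u, C * ‖u‖ ^ 2 ≤ ⟪fderiv ℝ (gradient f) x u, u⟫) (x v : E) :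
    f x + ⟪gradient f x, v⟫ + C / 2 * ‖v‖ ^ 2 ≤ f (x + v) := by
  set ψ : ℝ → ℝ := fun s => f (x + s • v) - s * ⟪gradient f x, v⟫ - C / 2 * s ^ 2 * ‖v‖ ^ 2
  have hderiv (s : ℝ) : HasDerivAt ψ
      (⟪gradient f (x + s • v) - gradient f x, v⟫ - C * s * ‖v‖ ^ 2) s := by
    have h₁ := ((hf.differentiable two_ne_zero) (x + s • v)).hasGradientAt.hasFDerivAt
      |>.hasDerivAt_comp_add_smul
    have h₂ : HasDerivAt (fun s : ℝ => s * ⟪gradient f x, v⟫) ⟪gradient f x, v⟫ s := by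
      simpa using (hasDerivAt_id s).mul_const ⟪gradient f x, v⟫
    have h₃ : HasDerivAt (fun s : ℝ => C / 2 * s ^ 2 * ‖v‖ ^ 2) (C * s * ‖v‖ ^ 2) s := by
      refine (((hasDerivAt_pow 2 s).const_mul (C / 2)).mul_const (‖v‖ ^ 2)).congr_deriv ?_
      ring
    refine ((h₁.sub h₂).sub h₃).congr_deriv ?_
    rw [toDual_apply_apply, inner_sub_left]
  have hmono : MonotoneOn ψ (Set.Ici 0) := by
    refine monotoneOn_of_deriv_nonneg (convex_Ici 0)
      (fun s _ => (hderiv s).continuousAt.continuousWithinAt)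
      (fun s _ => (hderiv s).differentiableAt.differentiableWithinAt) fun s hs => ?_
    rw [interior_Ici, Set.mem_Ioi] at hs
    have h := hf.mul_norm_sq_le_inner_gradient_sub hH (x + s • v) x
    rw [add_sub_cancel_left, norm_smul, inner_smul_right, mul_pow, Real.norm_eq_abs, sq_abs] at h
    rw [(hderiv s).deriv, sub_nonneg]
    nlinarith
  have := hmono Set.self_mem_Ici (Set.mem_Ici.2 zero_le_one) zero_le_one
  simp only [ψ, zero_smul, add_zero, one_smul, zero_mul, sub_zero, one_mul, one_pow, mul_one,
    ne_eq, OfNat.ofNat_ne_zero, not_false_eq_true, zero_pow, mul_zero] at this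
  linarith

theorem ContDiff.isSymmetric_fderiv_gradient (hf : ContDiff ℝ 2 f) (x : E) :
    (fderiv ℝ (gradient f) x : E →ₗ[ℝ] E).IsSymmetric := by
  have hfderiv : fderiv ℝ f = fun z => innerSL ℝ (gradient f z) := by
    ext z v; simp [gradient]
  have hsecond : fderiv ℝ (fderiv ℝ f) x = (innerSL ℝ).comp (fderiv ℝ (gradient f) x) := by
    rw [hfderiv]
    exact ((innerSL ℝ).hasFDerivAt.comp x
      ((hf.contDiff_gradient.differentiable one_ne_zero) x).hasFDerivAt).fderiv
  intro u w
  have := (hf.contDiffAt (x := x)).isSymmSndFDerivAt (by simp) u w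
  simpa [hsecond, real_inner_comm] using this

theorem ContDiff.isPositive_fderiv_gradient (hf : ContDiff ℝ 2 f) {C : ℝ} (hC : 0 ≤ C) (x : E)
    (hH : ∀ u, C * ‖u‖ ^ 2 ≤ ⟪fderiv ℝ (gradient f) x u, u⟫) :
    (fderiv ℝ (gradient f) x).IsPositive :=
  (ContinuousLinearMap.isPositive_iff _).2
    ⟨hf.isSymmetric_fderiv_gradient x, fun u => le_trans (by positivity) (hH u)⟩

theorem ContDiff.antilipschitzWith_gradient (hf : ContDiff ℝ 2 f) {C : ℝ} (hC : 0 < C)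
    (hH : ∀ x u, C * ‖u‖ ^ 2 ≤ ⟪fderiv ℝ (gradient f) x u, u⟫) :
    AntilipschitzWith (Real.toNNReal C⁻¹) (gradient f) := by
  refine AntilipschitzWith.of_le_mul_dist fun x y => ?_
  rw [Real.coe_toNNReal _ (inv_nonneg.2 hC.le), dist_eq_norm, dist_eq_norm, inv_mul_eq_div,
    le_div_iff₀' hC]
  have h := hf.mul_norm_sq_le_inner_gradient_sub hH x y
  have hCS := real_inner_le_norm (gradient f x - gradient f y) (x - y)
  nlinarith [norm_nonneg (x - y), norm_nonneg (gradient f x - gradient f y)]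

theorem ContDiff.surjective_gradient [FiniteDimensional ℝ E] (hf : ContDiff ℝ 2 f) {C : ℝ}
    (hC : 0 < C) (hH : ∀ x u, C * ‖u‖ ^ 2 ≤ ⟪fderiv ℝ (gradient f) x u, u⟫) :
    Function.Surjective (gradient f) := by
  intro y
  set k : E → ℝ := fun x => f x - ⟪y, x⟫
  set b := ‖gradient f 0‖ + ‖y‖
  have hk_ge (x : E) : f 0 - b * ‖x‖ + C / 2 * ‖x‖ ^ 2 ≤ k x := by
    have h := hf.add_inner_gradient_add_le hH 0 x
    rw [zero_add] at h
    nlinarith [neg_le_of_abs_le (abs_real_inner_le_norm (gradient f 0) x),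
      real_inner_le_norm y x]
  have hquad : Filter.Tendsto (fun r : ℝ => f 0 - b * r + C / 2 * r ^ 2) Filter.atTop
      Filter.atTop := by
    have h := (((Filter.tendsto_id.const_mul_atTop (half_pos hC)).atTop_add
      (tendsto_const_nhds (x := -b))).atTop_mul_atTop₀ Filter.tendsto_id).atTop_add
        (tendsto_const_nhds (x := f 0))
    refine h.congr fun r => ?_
    simp only [id]
    ring
  have hk_coercive : Filter.Tendsto k (Filter.cocompact E) Filter.atTop :=
    Filter.tendsto_atTop_mono hk_ge (hquad.comp tendsto_norm_cocompact_atTop)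
  obtain ⟨x, hx⟩ := (hf.continuous.sub (innerSL ℝ y).continuous).exists_forall_le hk_coercive
  have hk_deriv : HasFDerivAt k (toDual ℝ E (gradient f x) - innerSL ℝ y) x :=
    ((hf.differentiable two_ne_zero) x).hasGradientAt.hasFDerivAt.sub (innerSL ℝ y).hasFDerivAt
  have hcrit := IsLocalMin.hasFDerivAt_eq_zero (.of_forall hx) hk_deriv
  exact ⟨x, ext_inner_right ℝ fun v => by simpa [sub_eq_zero] using congr($hcrit v)⟩

end Gradient

section StronglyConvex

variable [FiniteDimensional ℝ E] {f : E → ℝ} {C : ℝ} (hf : ContDiff ℝ 2 f) (hC : 0 < C)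
  (hH : ∀ x u, C * ‖u‖ ^ 2 ≤ ⟪fderiv ℝ (gradient f) x u, u⟫)

noncomputable def gradientHomeomorph : E ≃ₜ E where
  toEquiv := .ofBijective (gradient f)
    ⟨(hf.antilipschitzWith_gradient hC hH).injective, hf.surjective_gradient hC hH⟩
  continuous_toFun := hf.contDiff_gradient.continuous
  continuous_invFun := ((hf.antilipschitzWith_gradient hC hH).to_rightInverse
    (Equiv.ofBijective _ _).right_inv).continuous

theorem gradient_gradientHomeomorph_symm (y : E) :
    gradient f ((gradientHomeomorph hf hC hH).symm y) = y :=
  (gradientHomeomorph hf hC hH).apply_symm_apply y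

theorem gradientHomeomorph_symm_gradient (x : E) :
    (gradientHomeomorph hf hC hH).symm (gradient f x) = x :=
  (gradientHomeomorph hf hC hH).symm_apply_apply x

noncomputable def hessianEquiv (x : E) : E ≃L[ℝ] E :=
  (fderiv ℝ (gradient f) x).equivOfCoercive hC (hH x)

@[simp]
theorem coe_hessianEquiv (x : E) :
    (hessianEquiv hC hH x : E →L[ℝ] E) = fderiv ℝ (gradient f) x :=
  ContinuousLinearMap.coe_equivOfCoercive _ hC (hH x)

theorem hasFDerivAt_gradient_hessianEquiv (hf : ContDiff ℝ 2 f) (x : E) :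
    HasFDerivAt (gradient f) (hessianEquiv hC hH x : E →L[ℝ] E) x := by
  rw [coe_hessianEquiv]
  exact (hf.contDiff_gradient.differentiable one_ne_zero x).hasFDerivAt

theorem hasFDerivAt_gradientHomeomorph_symm (y : E) :
    HasFDerivAt (gradientHomeomorph hf hC hH).symm
      ((hessianEquiv hC hH ((gradientHomeomorph hf hC hH).symm y)).symm : E →L[ℝ] E) y :=
  .of_local_left_inverse (gradientHomeomorph hf hC hH).symm.continuous.continuousAt
    (hasFDerivAt_gradient_hessianEquiv hC hH hf _)
    (.of_forall (gradient_gradientHomeomorph_symm hf hC hH))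

theorem contDiff_gradientHomeomorph_symm :
    ContDiff ℝ 1 (gradientHomeomorph hf hC hH).symm :=
  (gradientHomeomorph hf hC hH).contDiff_symm (hasFDerivAt_gradient_hessianEquiv hC hH hf)
    hf.contDiff_gradient

theorem fenchelConjugate_eq_comp_gradientHomeomorph_symm :
    fenchelConjugate f = fun ξ =>
      ⟪ξ, (gradientHomeomorph hf hC hH).symm ξ⟫ - f ((gradientHomeomorph hf hC hH).symm ξ) := by
  ext ξ
  refine fenchelConjugate_eq_of_le fun η => ?_
  have h := hf.add_inner_gradient_add_le hH ((gradientHomeomorph hf hC hH).symm ξ)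
    (η - (gradientHomeomorph hf hC hH).symm ξ)
  rw [add_sub_cancel, gradient_gradientHomeomorph_symm] at h
  nlinarith

theorem hasGradientAt_fenchelConjugate (ξ : E) :
    HasGradientAt (fenchelConjugate f) ((gradientHomeomorph hf hC hH).symm ξ) ξ := by
  rw [fenchelConjugate_eq_comp_gradientHomeomorph_symm hf hC hH]
  refine HasGradientAt.hasGradientAt_inner_self_sub_comp ?_
    (hasFDerivAt_gradientHomeomorph_symm hf hC hH ξ)
  simpa only [gradient_gradientHomeomorph_symm hf hC hH] using
    ((hf.differentiable two_ne_zero) ((gradientHomeomorph hf hC hH).symm ξ)).hasGradientAt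

theorem gradient_fenchelConjugate :
    gradient (fenchelConjugate f) = (gradientHomeomorph hf hC hH).symm :=
  funext fun ξ => (hasGradientAt_fenchelConjugate hf hC hH ξ).gradient

theorem contDiff_fenchelConjugate (hf : ContDiff ℝ 2 f) (hC : 0 < C)
    (hH : ∀ x u, C * ‖u‖ ^ 2 ≤ ⟪fderiv ℝ (gradient f) x u, u⟫) :
    ContDiff ℝ 2 (fenchelConjugate f) := by
  have hfderiv : fderiv ℝ (fenchelConjugate f) = fun ξ =>
      toDual ℝ E ((gradientHomeomorph hf hC hH).symm ξ) :=
    funext fun ξ => (hasGradientAt_fenchelConjugate hf hC hH ξ).hasFDerivAt.fderiv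
  rw [show (2 : WithTop ℕ∞) = 1 + 1 from rfl, contDiff_succ_iff_fderiv, hfderiv]
  exact ⟨fun ξ => (hasGradientAt_fenchelConjugate hf hC hH ξ).differentiableAt, by simp,
    (toDual ℝ E).contDiff.comp (contDiff_gradientHomeomorph_symm hf hC hH)⟩

theorem fderiv_gradient_fenchelConjugate (y : E) :
    fderiv ℝ (gradient (fenchelConjugate f)) y =
      ((hessianEquiv hC hH ((gradientHomeomorph hf hC hH).symm y)).symm : E →L[ℝ] E) := by
  rw [gradient_fenchelConjugate hf hC hH]
  exact (hasFDerivAt_gradientHomeomorph_symm hf hC hH y).fderiv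

end StronglyConvex

theorem statement5_general
    (n : ℕ) (τ : ℝ)
    (H : ℝ → EuclideanSpace ℝ (Fin (2 * n)) → ℝ)
    (C₁ C₂ : ℝ) (hC₁ : 0 < C₁)
    (hH : ∀ᵐ t ∂(volume.restrict (Set.Icc 0 τ)),
      ContDiff ℝ 2 (H t) ∧
      ∀ ξ η : EuclideanSpace ℝ (Fin (2 * n)),
        C₁ * ‖η‖ ^ 2 ≤ (inner ℝ ((fderiv ℝ (gradient (H t)) ξ) η) η : ℝ) ∧
        (inner ℝ ((fderiv ℝ (gradient (H t)) ξ) η) η : ℝ) ≤ C₂ * ‖η‖ ^ 2) :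
    ∀ᵐ t ∂(volume.restrict (Set.Icc 0 τ)),
      ContDiff ℝ 2 (fun ξ : EuclideanSpace ℝ (Fin (2 * n)) =>
        ⨆ η, ((inner ℝ ξ η : ℝ) - H t η)) ∧
      (∀ ξs η : EuclideanSpace ℝ (Fin (2 * n)),
        C₂⁻¹ * ‖η‖ ^ 2 ≤
          (inner ℝ ((fderiv ℝ (gradient fun ξ : EuclideanSpace ℝ (Fin (2 * n)) =>
            ⨆ η', ((inner ℝ ξ η' : ℝ) - H t η')) ξs) η) η : ℝ) ∧
        (inner ℝ ((fderiv ℝ (gradient fun ξ : EuclideanSpace ℝ (Fin (2 * n)) =>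
            ⨆ η', ((inner ℝ ξ η' : ℝ) - H t η')) ξs) η) η : ℝ) ≤ C₁⁻¹ * ‖η‖ ^ 2) ∧
      ∀ ξ : EuclideanSpace ℝ (Fin (2 * n)),
        ((fderiv ℝ (gradient fun ξ' : EuclideanSpace ℝ (Fin (2 * n)) =>
            ⨆ η', ((inner ℝ ξ' η' : ℝ) - H t η')) (gradient (H t) ξ)).comp
          (fderiv ℝ (gradient (H t)) ξ) = ContinuousLinearMap.id ℝ _) ∧
        ((fderiv ℝ (gradient (H t)) ξ).comp
          (fderiv ℝ (gradient fun ξ' : EuclideanSpace ℝ (Fin (2 * n)) =>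
            ⨆ η', ((inner ℝ ξ' η' : ℝ) - H t η')) (gradient (H t) ξ)) =
          ContinuousLinearMap.id ℝ _) := by
  filter_upwards [hH] with t ⟨hf, hHess⟩
  have hlow (ξ η) := (hHess ξ η).1
  rw [show (fun ξ ↦ ⨆ η, ⟪ξ, η⟫ - H t η) = fenchelConjugate (H t) from rfl]
  refine ⟨contDiff_fenchelConjugate hf hC₁ hlow, fun ξs η => ?_, fun ξ => ?_⟩
  · rw [fderiv_gradient_fenchelConjugate hf hC₁ hlow]
    set e := hessianEquiv hC₁ hlow ((gradientHomeomorph hf hC₁ hlow).symm ξs)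
    exact ⟨e.inv_mul_le_inner_symm_apply (hf.isPositive_fderiv_gradient hC₁.le _ (hlow _))
      (fun u => (hHess _ u).2) η, e.inner_symm_apply_le hC₁ (hlow _) η⟩
  · rw [fderiv_gradient_fenchelConjugate hf hC₁ hlow, gradientHomeomorph_symm_gradient,
      ← coe_hessianEquiv hC₁ hlow ξ]
    exact ⟨(hessianEquiv hC₁ hlow ξ).coe_symm_comp_coe, (hessianEquiv hC₁ hlow ξ).coe_comp_coe_symm⟩

/-- Let `H : [0,τ] × ℝ^{2n} → ℝ` be measurable in `t`, `C²` in `ξ` for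
a.e. `t`, with `C₁|η|² ≤ (H''_t(ξ)η, η) ≤ C₂|η|²` for constants `0 < C₁ < C₂`.  Then for
a.e. `t` the Fenchel conjugate `H*_t(ξ) = sup_η (⟨ξ,η⟩ − H(t,η))` is twice (continuously)
differentiable, its Hessian satisfies `C₂⁻¹|η|² ≤ ((H*_t)''(ξ*)η, η) ≤ C₁⁻¹|η|²` for all
`ξ*`, `η`, and at `ξ* = ∇H_t(ξ)` one has `(H*_t)''(ξ*) = (H''_t(ξ))⁻¹`
(the compositions of the two Hessians in both orders are the identity). -/
theorem statement5
    (n : ℕ) (τ : ℝ) (hτ : 0 < τ)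
    (H : ℝ → EuclideanSpace ℝ (Fin (2 * n)) → ℝ)
    (hmeas : ∀ ξ, Measurable fun t => H t ξ)
    (C₁ C₂ : ℝ) (hC₁ : 0 < C₁) (hC : C₁ < C₂)
    (hH : ∀ᵐ t ∂(volume.restrict (Set.Icc 0 τ)),
      ContDiff ℝ 2 (H t) ∧
      ∀ ξ η : EuclideanSpace ℝ (Fin (2 * n)),
        C₁ * ‖η‖ ^ 2 ≤ (inner ℝ ((fderiv ℝ (gradient (H t)) ξ) η) η : ℝ) ∧
        (inner ℝ ((fderiv ℝ (gradient (H t)) ξ) η) η : ℝ) ≤ C₂ * ‖η‖ ^ 2) :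
    ∀ᵐ t ∂(volume.restrict (Set.Icc 0 τ)),
      ContDiff ℝ 2 (fun ξ : EuclideanSpace ℝ (Fin (2 * n)) =>
        ⨆ η, ((inner ℝ ξ η : ℝ) - H t η)) ∧
      (∀ ξs η : EuclideanSpace ℝ (Fin (2 * n)),
        C₂⁻¹ * ‖η‖ ^ 2 ≤
          (inner ℝ ((fderiv ℝ (gradient fun ξ : EuclideanSpace ℝ (Fin (2 * n)) =>
            ⨆ η', ((inner ℝ ξ η' : ℝ) - H t η')) ξs) η) η : ℝ) ∧
        (inner ℝ ((fderiv ℝ (gradient fun ξ : EuclideanSpace ℝ (Fin (2 * n)) =>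
            ⨆ η', ((inner ℝ ξ η' : ℝ) - H t η')) ξs) η) η : ℝ) ≤ C₁⁻¹ * ‖η‖ ^ 2) ∧
      ∀ ξ : EuclideanSpace ℝ (Fin (2 * n)),
        ((fderiv ℝ (gradient fun ξ' : EuclideanSpace ℝ (Fin (2 * n)) =>
            ⨆ η', ((inner ℝ ξ' η' : ℝ) - H t η')) (gradient (H t) ξ)).comp
          (fderiv ℝ (gradient (H t)) ξ) = ContinuousLinearMap.id ℝ _) ∧
        ((fderiv ℝ (gradient (H t)) ξ).comp
          (fderiv ℝ (gradient fun ξ' : EuclideanSpace ℝ (Fin (2 * n)) =>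
            ⨆ η', ((inner ℝ ξ' η' : ℝ) - H t η')) (gradient (H t) ξ)) =
          ContinuousLinearMap.id ℝ _) :=
  statement5_general n τ H C₁ C₂ hC₁ hH
end

section
/- Let A ∈ L_s(ℝ^{2n}) be a positive definite symmetric matrix and M ∈ Sp(2n,ℝ). Then the set Γ(A) = {t ∈ ℝ \ {0} : dim Ker(exp(tA) − M) > 0} is a discrete subset of ℝ. -/
/-!
Diagonalising `A = U diag(λ) Uᵀ` with all `λᵢ > 0` shows that `t ↦ det (exp (t A) - M)` is a
real-analytic function of `t` which tends to `det (-M) = 1` (as `-M` is symplectic) when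
`t → -∞`. It is therefore not identically zero, so by the identity theorem its zeros
cannot accumulate anywhere in `ℝ`.
-/

open Matrix Filter Set Topology

theorem AnalyticAt.matrix_det {𝕜 E ι : Type*} [NontriviallyNormedField 𝕜]
    [NormedAddCommGroup E] [NormedSpace 𝕜 E] [Fintype ι] [DecidableEq ι]
    {f : E → Matrix ι ι 𝕜} {z : E} (hf : ∀ i j, AnalyticAt 𝕜 (fun x => f x i j) z) :
    AnalyticAt 𝕜 (fun x => (f x).det) z := by
  simp only [det_apply']
  exact Finset.analyticAt_fun_sum _ fun σ _ =>
    analyticAt_const.mul (Finset.analyticAt_fun_prod _ fun i _ => hf (σ i) i)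

theorem AnalyticOnNhd.not_accPt_zeros {𝕜 E : Type*} [NontriviallyNormedField 𝕜]
    [PreconnectedSpace 𝕜] [NormedAddCommGroup E] [NormedSpace 𝕜 E] {g : 𝕜 → E}
    (hg : AnalyticOnNhd 𝕜 g univ) (hne : ∃ t, g t ≠ 0) (x : 𝕜) :
    ¬ AccPt x (𝓟 {t | g t = 0}) := by
  intro hx
  obtain ⟨t, ht⟩ := hne
  have hfreq : ∃ᶠ t in 𝓝[≠] x, g t = 0 := by
    simpa only [accPt_iff_frequently_nhdsNE, mem_ofPred_eq] using hx
  exact ht (hg.eqOn_zero_of_preconnected_of_frequently_eq_zero isPreconnected_univ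
    (mem_univ x) hfreq (mem_univ t))

namespace Matrix

variable {ι : Type*} [Fintype ι] [DecidableEq ι] {A : Matrix ι ι ℝ}

theorem IsHermitian.exp_smul (hA : A.IsHermitian) (t : ℝ) :
    NormedSpace.exp (t • A) = (hA.eigenvectorUnitary : Matrix ι ι ℝ) *
      diagonal (fun i => Real.exp (t * hA.eigenvalues i)) *
      star (hA.eigenvectorUnitary : Matrix ι ι ℝ) := by
  set U : Matrix ι ι ℝ := ↑hA.eigenvectorUnitary
  have hU : IsUnit U := Unitary.isUnit_coe
  have hUinv : U⁻¹ = star U :=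
    inv_eq_left_inv (mem_unitaryGroup_iff'.mp hA.eigenvectorUnitary.2)
  have hconj : t • A = U * diagonal (fun i => t * hA.eigenvalues i) * U⁻¹ := by
    conv_lhs => rw [hA.spectral_theorem, Unitary.conjStarAlgAut_apply]
    rw [hUinv, ← smul_mul_assoc, ← mul_smul_comm, ← diagonal_smul]
    rfl
  rw [hconj, exp_conj U _ hU, exp_diagonal, hUinv]
  congr 3
  funext i
  rw [Pi.exp_def, Real.exp_eq_exp_ℝ]

theorem IsHermitian.analyticAt_exp_smul_apply (hA : A.IsHermitian) (i j : ι) (t : ℝ) :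
    AnalyticAt ℝ (fun s : ℝ => NormedSpace.exp (s • A) i j) t := by
  simp only [hA.exp_smul, mul_apply, diagonal_apply, mul_ite, mul_zero,
    Finset.sum_ite_eq', Finset.mem_univ, if_true]
  fun_prop

theorem PosDef.tendsto_exp_smul_atBot (hA : A.PosDef) :
    Tendsto (fun t : ℝ => NormedSpace.exp (t • A)) atBot (𝓝 0) := by
  set U : Matrix ι ι ℝ := ↑hA.1.eigenvectorUnitary
  have hdiag : Tendsto (fun t : ℝ => diagonal (fun i => Real.exp (t * hA.1.eigenvalues i)))
      atBot (𝓝 0) := by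
    rw [← diagonal_zero]
    refine (continuous_id.matrix_diagonal).tendsto _ |>.comp (tendsto_pi_nhds.2 fun i => ?_)
    exact Real.tendsto_exp_atBot.comp (tendsto_id.atBot_mul_const (hA.eigenvalues_pos i))
  have hmul : Continuous fun D : Matrix ι ι ℝ => U * D * star U :=
    (continuous_const.matrix_mul continuous_id).matrix_mul continuous_const
  simpa only [Function.comp_def, hA.1.exp_smul, Matrix.mul_zero, Matrix.zero_mul] using
    (hmul.tendsto 0).comp hdiag

end Matrix

/-- Let `A` be a positive definite symmetric real `2n×2n` matrix and
`M ∈ Sp(2n,ℝ)`.  Then `Γ(A) = {t ∈ ℝ \ {0} : dim Ker(exp(tA) − M) > 0}` is a discrete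
subset of `ℝ`, i.e. it has no accumulation point in `ℝ`.  (Here `dim Ker(exp(tA) − M) > 0`
is expressed by `det(exp(tA) − M) = 0`.) -/
theorem statement10
    (n : ℕ) (A : Matrix (Fin n ⊕ Fin n) (Fin n ⊕ Fin n) ℝ)
    (hA : A.PosDef)
    (M : Matrix (Fin n ⊕ Fin n) (Fin n ⊕ Fin n) ℝ)
    (hM : M ∈ Matrix.symplecticGroup (Fin n) ℝ) :
    ∀ x : ℝ, ¬ AccPt x (Filter.principal
      {t : ℝ | t ≠ 0 ∧ (NormedSpace.exp (t • A) - M).det = 0}) := by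
  intro x hx
  set g : ℝ → ℝ := fun t => (NormedSpace.exp (t • A) - M).det
  have hg : AnalyticOnNhd ℝ g univ := fun t _ =>
    AnalyticAt.matrix_det fun i j => (hA.1.analyticAt_exp_smul_apply i j t).sub analyticAt_const
  have hlim : Tendsto g atBot (𝓝 (0 - M).det) :=
    (continuous_id.matrix_det.tendsto _).comp (hA.tendsto_exp_smul_atBot.sub_const M)
  have hdet : (0 - M).det ≠ 0 := by
    rw [zero_sub, SymplecticGroup.det_eq_one (SymplecticGroup.neg_mem hM)]
    exact one_ne_zero
  exact hg.not_accPt_zeros (hlim.eventually_ne hdet).exists x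
    (hx.mono (principal_mono.2 fun t ht => ht.2))
end

section
/- Let M ∈ Sp(2n,ℝ), A ∈ L^∞([0,τ]; L_s(ℝ^{2n})), γ_A the fundamental solution of ẋ = JA(t)x, and suppose det(γ_A(τ) − M) ≠ 0. Then the operator Λ_{M,τ,A} : W^{1,2}_M([0,τ];ℝ^{2n}) → L²([0,τ];ℝ^{2n}), u ↦ Ju̇ + Au, is a Banach space isomorphism. -/
/-!
With `B = JA`, the equation `Ju̇ + Au = w` reads `u̇ = Bu - Jw`. As `B` is bounded, an integral
Grönwall inequality shows that solutions are determined by their value at either end of `[0, t]`;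
hence the homogeneous solutions are exactly `t ↦ γ t ξ`, and every `γ t` is invertible. Variation
of constants, `v t = γ t ∫₀ᵗ (γ r)⁻¹ J w r dr` (checked by Fubini on the triangle `r < s`), is a
particular solution, so the solutions are `γ ξ - v`, and the boundary condition `u τ = M u 0`
becomes `(γ τ - M) ξ = v τ`, which has exactly one solution since `det (γ τ - M) ≠ 0`.
-/

open MeasureTheory intervalIntegral Set Topology Matrix

theorem MeasureTheory.IntegrableOn.intervalIntegrable_of_mem_Icc {E : Type*}
    [NormedAddCommGroup E] {f : ℝ → E} {a b r t : ℝ} (hf : IntegrableOn f (Icc a b))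
    (hr : r ∈ Icc a b) (ht : t ∈ Icc a b) : IntervalIntegrable f volume r t :=
  (hf.mono_set (uIcc_subset_Icc hr ht)).intervalIntegrable

section Gronwall

variable {E : Type*} [NormedAddCommGroup E] {x : ℝ → E} {a b K : ℝ}

/- Grönwall's inequality for the primitive `Φ t = ∫ₐᵗ ‖x‖`, which satisfies `Φ' ≤ K Φ` and
`Φ a = 0`. -/
theorem eq_zero_of_norm_le_mul_integral_norm (hx : ContinuousOn x (Icc a b))
    (h : ∀ t ∈ Icc a b, ‖x t‖ ≤ K * ∫ s in a..t, ‖x s‖) : ∀ t ∈ Icc a b, x t = 0 := by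
  have hΦ : ∀ t ∈ Icc a b, ∫ s in a..t, ‖x s‖ = 0 := by
    refine eq_zero_of_abs_deriv_le_mul_abs_self_of_eq_zero_right (f' := fun t => ‖x t‖) (K := K)
      (fun t ht => ?_) (fun t ht => ?_) integral_same (fun t ht => ?_)
    · have hab : uIcc a b = Icc a b := uIcc_of_le (ht.1.trans ht.2)
      rw [← hab] at ht hx ⊢
      exact continuousOn_primitive_interval (hx.norm.integrableOn_compact isCompact_uIcc) t ht
    · have hmem : Icc a b ∈ 𝓝[>] t := Icc_mem_nhdsGT_of_mem ht
      have ht' : t ∈ Icc a b := Ico_subset_Icc_self ht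
      exact integral_hasDerivWithinAt_right
        (hx.norm.mono (uIcc_subset_Icc ⟨le_rfl, ht'.1.trans ht'.2⟩ ht')).intervalIntegrable
        ⟨Icc a b, hmem, hx.norm.aestronglyMeasurable measurableSet_Icc⟩
        ((hx.norm t ht').mono_of_mem_nhdsWithin hmem)
    · rw [norm_norm, Real.norm_of_nonneg (integral_nonneg ht.1 fun _ _ => norm_nonneg _)]
      exact h t (Ico_subset_Icc_self ht)
  intro t ht
  simpa [hΦ t ht] using h t ht

theorem eq_zero_of_norm_le_mul_integral_norm_right (hx : ContinuousOn x (Icc a b))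
    (h : ∀ t ∈ Icc a b, ‖x t‖ ≤ K * ∫ s in t..b, ‖x s‖) : ∀ t ∈ Icc a b, x t = 0 := by
  have hrefl : MapsTo (fun r => a + b - r) (Icc a b) (Icc a b) := fun r hr =>
    ⟨by linarith [hr.2], by linarith [hr.1]⟩
  have hy := eq_zero_of_norm_le_mul_integral_norm (x := fun r => x (a + b - r))
    (hx.comp (by fun_prop) hrefl) fun r hr => by
      simpa [integral_comp_sub_left fun s => ‖x s‖] using h _ (hrefl hr)
  intro t ht
  simpa using hy _ (hrefl ht)

variable [NormedSpace ℝ E] {F : ℝ → E → E}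

theorem eq_zero_of_eq_integral (hF : ∀ s ∈ Icc a b, ∀ v, ‖F s v‖ ≤ K * ‖v‖)
    (hx : ContinuousOn x (Icc a b)) (h : ∀ t ∈ Icc a b, x t = ∫ s in a..t, F s (x s)) :
    ∀ t ∈ Icc a b, x t = 0 :=
  eq_zero_of_norm_le_mul_integral_norm (K := K) hx fun t ht => by
    rw [h t ht, ← intervalIntegral.integral_const_mul]
    refine norm_integral_le_of_norm_le ht.1
      (ae_of_all _ fun s hs => hF s ⟨hs.1.le, hs.2.trans ht.2⟩ (x s)) ?_
    exact (hx.norm.mono (uIcc_subset_Icc ⟨le_rfl, ht.1.trans ht.2⟩ ht)).intervalIntegrable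
      |>.const_mul K

theorem eq_zero_of_eq_integral_right (hF : ∀ s ∈ Icc a b, ∀ v, ‖F s v‖ ≤ K * ‖v‖)
    (hx : ContinuousOn x (Icc a b)) (h : ∀ t ∈ Icc a b, x t = ∫ s in b..t, F s (x s)) :
    ∀ t ∈ Icc a b, x t = 0 :=
  eq_zero_of_norm_le_mul_integral_norm_right (K := K) hx fun t ht => by
    rw [h t ht, integral_symm, norm_neg, ← intervalIntegral.integral_const_mul]
    refine norm_integral_le_of_norm_le ht.2
      (ae_of_all _ fun s hs => hF s ⟨ht.1.trans hs.1.le, hs.2⟩ (x s)) ?_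
    exact (hx.norm.mono (uIcc_subset_Icc ht ⟨ht.1.trans ht.2, le_rfl⟩)).intervalIntegrable
      |>.const_mul K

end Gronwall

theorem integral_integral_triangle {E : Type*} [NormedAddCommGroup E] [NormedSpace ℝ E]
    [CompleteSpace E] {F : ℝ → ℝ → E} {a b : ℝ} (hab : a ≤ b)
    (hF : IntegrableOn (Function.uncurry F) (Icc a b ×ˢ Icc a b)) :
    ∫ s in a..b, ∫ r in a..s, F s r = ∫ r in a..b, ∫ s in r..b, F s r := by
  set G : ℝ × ℝ → E := {p | p.2 < p.1}.indicator (Function.uncurry F)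
  have hG : Integrable (Function.uncurry fun s r => G (s, r))
      ((volume.restrict (Ioc a b)).prod (volume.restrict (Ioc a b))) := by
    rw [Measure.prod_restrict, ← Measure.volume_eq_prod]
    exact (hF.mono_set (prod_mono Ioc_subset_Icc_self Ioc_subset_Icc_self)).indicator
      (measurableSet_lt measurable_snd measurable_fst)
  have inner_left : ∀ s ∈ Ioc a b, ∫ r in a..s, F s r = ∫ r in Ioc a b, G (s, r) := by
    intro s hs
    have hGs : (fun r => G (s, r)) = (Iio s).indicator (F s) := by
      ext r; by_cases hr : r < s <;> simp [G, hr]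
    have hIoo : Ioc a b ∩ Iio s = Ioo a s := by
      ext r; simp only [mem_Ioo, mem_inter_iff, mem_Ioc, mem_Iio]; grind
    rw [integral_of_le hs.1.le, integral_Ioc_eq_integral_Ioo, hGs,
      setIntegral_indicator measurableSet_Iio, hIoo]
  have inner_right : ∀ r ∈ Ioc a b, ∫ s in r..b, F s r = ∫ s in Ioc a b, G (s, r) := by
    intro r hr
    have hGr : (fun s => G (s, r)) = (Ioi r).indicator (F · r) := by
      ext s; by_cases hs : r < s <;> simp [G, hs]
    rw [integral_of_le hr.2, hGr, setIntegral_indicator measurableSet_Ioi, Ioc_inter_Ioi,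
      sup_eq_right.2 hr.1.le]
  rw [integral_of_le hab, integral_of_le hab, setIntegral_congr_fun measurableSet_Ioc inner_left,
    setIntegral_congr_fun measurableSet_Ioc inner_right, integral_integral_swap hG]

section MatrixFunctions

variable {ι : Type*} [Fintype ι]

theorem norm_mulVec_le_of_abs_le {B : Matrix ι ι ℝ} {C : ℝ} (hB : ∀ i j, |B i j| ≤ C)
    (v : ι → ℝ) : ‖B *ᵥ v‖ ≤ Fintype.card ι * C * ‖v‖ := by
  rcases isEmpty_or_nonempty ι with _ | ⟨⟨i₀⟩⟩
  · simp [Subsingleton.elim v 0]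
  have hC : 0 ≤ C := (abs_nonneg _).trans (hB i₀ i₀)
  refine (pi_norm_le_iff_of_nonneg (by positivity)).2 fun i => ?_
  calc ‖(B *ᵥ v) i‖ = |∑ j, B i j * v j| := rfl
    _ ≤ ∑ j, |B i j| * ‖v‖ := (Finset.abs_sum_le_sum_abs _ _).trans <| Finset.sum_le_sum
        fun j _ => by
          rw [abs_mul]
          exact mul_le_mul_of_nonneg_left (norm_le_pi_norm v j) (abs_nonneg _)
    _ ≤ ∑ _j : ι, C * ‖v‖ :=
        Finset.sum_le_sum fun j _ => mul_le_mul_of_nonneg_right (hB i j) (norm_nonneg v)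
    _ = Fintype.card ι * C * ‖v‖ := by simp [mul_assoc]

theorem mulVec_intervalIntegral (M : Matrix ι ι ℝ) {f : ℝ → ι → ℝ} {a b : ℝ}
    (hf : IntervalIntegrable f volume a b) :
    M *ᵥ ∫ s in a..b, f s = ∫ s in a..b, M *ᵥ f s :=
  ((mulVecLin M).toContinuousLinearMap.intervalIntegral_comp_comm hf).symm

theorem MeasureTheory.IntegrableOn.continuousOn_mulVec {G : ℝ → Matrix ι ι ℝ}
    {f : ℝ → ι → ℝ} {K : Set ℝ} (hG : ContinuousOn G K) (hf : IntegrableOn f K)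
    (hK : IsCompact K) : IntegrableOn (fun s => G s *ᵥ f s) K :=
  integrable_pi_iff.2 fun i => integrable_finsetSum _ fun j _ =>
    IntegrableOn.continuousOn_mul ((continuous_id.matrix_elem i j).comp_continuousOn hG)
      (integrable_pi_iff.1 hf j) hK

theorem integrableOn_prod_mulVec {P : ℝ → Matrix ι ι ℝ} {h : ℝ → ι → ℝ} {S T : Set ℝ}
    (hP : ∀ i j, IntegrableOn (fun s => P s i j) S) (hh : IntegrableOn h T) :
    IntegrableOn (fun p : ℝ × ℝ => P p.1 *ᵥ h p.2) (S ×ˢ T) := by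
  rw [IntegrableOn, Measure.volume_eq_prod, ← Measure.prod_restrict]
  exact integrable_pi_iff.2 fun i => integrable_finsetSum _ fun j _ =>
    (hP i j).mul_prod (integrable_pi_iff.1 hh j)

structure IsBoundedMeasurable (B : ℝ → Matrix ι ι ℝ) : Prop where
  measurable_apply : ∀ i j, Measurable fun s => B s i j
  exists_abs_le : ∃ C, ∀ s i j, |B s i j| ≤ C

namespace IsBoundedMeasurable

variable {B : ℝ → Matrix ι ι ℝ}

theorem const_mul (hB : IsBoundedMeasurable B) (P : Matrix ι ι ℝ) :
    IsBoundedMeasurable fun s => P * B s where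
  measurable_apply i j := by
    simp only [mul_apply]
    exact Finset.measurable_sum _ fun k _ => (hB.measurable_apply k j).const_mul _
  exists_abs_le := by
    obtain ⟨C, hC⟩ := hB.exists_abs_le
    have hC' : ∀ s k j, |B s k j| ≤ max C 0 := fun s k j => (hC s k j).trans (le_max_left _ _)
    refine ⟨∑ i, ∑ k, |P i k| * max C 0, fun s i j => ?_⟩
    calc |(P * B s) i j| = |∑ k, P i k * B s k j| := rfl
      _ ≤ ∑ k, |P i k| * max C 0 := (Finset.abs_sum_le_sum_abs _ _).trans <|
          Finset.sum_le_sum fun k _ => by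
            rw [abs_mul]
            exact mul_le_mul_of_nonneg_left (hC' s k j) (abs_nonneg _)
      _ ≤ ∑ i, ∑ k, |P i k| * max C 0 :=
          Finset.single_le_sum (f := fun i => ∑ k, |P i k| * max C 0)
            (fun i _ => Finset.sum_nonneg fun k _ => by positivity) (Finset.mem_univ i)

theorem exists_norm_mulVec_le (hB : IsBoundedMeasurable B) :
    ∃ K, ∀ s v, ‖B s *ᵥ v‖ ≤ K * ‖v‖ :=
  let ⟨_, hC⟩ := hB.exists_abs_le
  ⟨_, fun s => norm_mulVec_le_of_abs_le (hC s)⟩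

theorem integrableOn_mulVec (hB : IsBoundedMeasurable B) {x : ℝ → ι → ℝ} {K : Set ℝ}
    (hK : IsCompact K) (hx : ContinuousOn x K) : IntegrableOn (fun s => B s *ᵥ x s) K := by
  obtain ⟨C, hC⟩ := hB.exists_abs_le
  exact integrable_pi_iff.2 fun i => integrable_finsetSum _ fun j _ =>
    (IntegrableOn.of_bound hK.measure_lt_top (hB.measurable_apply i j).aestronglyMeasurable C
      (ae_of_all _ fun s => hC s i j)).mul_continuousOn
      ((continuous_apply j).comp_continuousOn hx) hK

end IsBoundedMeasurable

end MatrixFunctions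

section LinearSystem

variable {ι : Type*} [Fintype ι] {B γ : ℝ → Matrix ι ι ℝ} {τ : ℝ}

structure IsFundamentalSolution (B γ : ℝ → Matrix ι ι ℝ) : Prop where
  continuous : Continuous γ
  mulVec_eq : ∀ ξ t, γ t *ᵥ ξ = ξ + ∫ s in (0 : ℝ)..t, B s *ᵥ (γ s *ᵥ ξ)

def IsIntegralSolutionOn (B : ℝ → Matrix ι ι ℝ) (g : ℝ → ι → ℝ) (τ : ℝ) (u : ℝ → ι → ℝ) :
    Prop :=
  ContinuousOn u (Icc 0 τ) ∧ ∀ t ∈ Icc 0 τ, u t = u 0 + ∫ s in (0 : ℝ)..t, (B s *ᵥ u s - g s)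

noncomputable def variationOfConstants [DecidableEq ι] (γ : ℝ → Matrix ι ι ℝ)
    (g : ℝ → ι → ℝ) (t : ℝ) : ι → ℝ :=
  γ t *ᵥ ∫ r in (0 : ℝ)..t, (γ r)⁻¹ *ᵥ g r

@[simp]
theorem variationOfConstants_zero [DecidableEq ι] (γ : ℝ → Matrix ι ι ℝ) (g : ℝ → ι → ℝ) :
    variationOfConstants γ g 0 = 0 := by
  simp [variationOfConstants]

namespace IsIntegralSolutionOn

theorem sub (hB : IsBoundedMeasurable B) {g₁ g₂ u₁ u₂ : ℝ → ι → ℝ}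
    (h₁ : IsIntegralSolutionOn B g₁ τ u₁) (h₂ : IsIntegralSolutionOn B g₂ τ u₂)
    (hg₁ : IntegrableOn g₁ (Icc 0 τ)) (hg₂ : IntegrableOn g₂ (Icc 0 τ)) :
    IsIntegralSolutionOn B (g₁ - g₂) τ (u₁ - u₂) := by
  refine ⟨h₁.1.sub h₂.1, fun t ht => ?_⟩
  have hint : ∀ {g u : ℝ → ι → ℝ}, IntegrableOn g (Icc 0 τ) → ContinuousOn u (Icc 0 τ) →
      IntervalIntegrable (fun s => B s *ᵥ u s - g s) volume 0 t := fun hg hu =>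
    ((hB.integrableOn_mulVec isCompact_Icc hu).sub hg).intervalIntegrable_of_mem_Icc
      ⟨le_rfl, ht.1.trans ht.2⟩ ht
  simp only [Pi.sub_apply]
  rw [h₁.2 t ht, h₂.2 t ht, add_sub_add_comm, ← integral_sub (hint hg₁ h₁.1) (hint hg₂ h₂.1)]
  congr 1
  refine integral_congr fun s _ => ?_
  simp only [mulVec_sub]
  abel

theorem eq_zero (hB : IsBoundedMeasurable B) {x : ℝ → ι → ℝ} (h : IsIntegralSolutionOn B 0 τ x)
    (h0 : x 0 = 0) : ∀ t ∈ Icc 0 τ, x t = 0 :=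
  let ⟨_, hK⟩ := hB.exists_norm_mulVec_le
  eq_zero_of_eq_integral (F := fun s v => B s *ᵥ v) (fun s _ => hK s) h.1 fun t ht => by
    simpa [h0] using h.2 t ht

end IsIntegralSolutionOn

namespace IsFundamentalSolution

theorem apply_zero (hγ : IsFundamentalSolution B γ) (ξ : ι → ℝ) : γ 0 *ᵥ ξ = ξ := by
  simpa using hγ.mulVec_eq ξ 0

theorem continuous_mulVec (hγ : IsFundamentalSolution B γ) (ξ : ι → ℝ) :
    Continuous fun t => γ t *ᵥ ξ :=
  hγ.continuous.matrix_mulVec continuous_const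

theorem integral_mulVec_eq_sub (hγ : IsFundamentalSolution B γ) (hB : IsBoundedMeasurable B)
    (ξ : ι → ℝ) (r t : ℝ) : ∫ s in r..t, B s *ᵥ (γ s *ᵥ ξ) = γ t *ᵥ ξ - γ r *ᵥ ξ := by
  have hint : ∀ t, IntervalIntegrable (fun s => B s *ᵥ (γ s *ᵥ ξ)) volume 0 t := fun t =>
    (hB.integrableOn_mulVec isCompact_uIcc (hγ.continuous_mulVec ξ).continuousOn).intervalIntegrable
  rw [← integral_interval_sub_left (hint t) (hint r), hγ.mulVec_eq ξ t, hγ.mulVec_eq ξ r]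
  abel

theorem isIntegralSolutionOn (hγ : IsFundamentalSolution B γ) (τ : ℝ) (ξ : ι → ℝ) :
    IsIntegralSolutionOn B 0 τ fun t => γ t *ᵥ ξ :=
  ⟨(hγ.continuous_mulVec ξ).continuousOn, fun t _ => by
    simpa [hγ.apply_zero] using hγ.mulVec_eq ξ t⟩

theorem eq_mulVec_of_isIntegralSolutionOn (hγ : IsFundamentalSolution B γ)
    (hB : IsBoundedMeasurable B) {x : ℝ → ι → ℝ} (h : IsIntegralSolutionOn B 0 τ x) :
    ∀ t ∈ Icc 0 τ, x t = γ t *ᵥ x 0 := by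
  have hdiff := h.sub hB (hγ.isIntegralSolutionOn τ (x 0)) integrableOn_zero integrableOn_zero
  rw [sub_self] at hdiff
  intro t ht
  exact sub_eq_zero.1 (hdiff.eq_zero hB (by simp [hγ.apply_zero]) t ht)

/- A kernel vector `v` of `γ t` gives the solution `s ↦ γ s v` vanishing at `t`, so backward
uniqueness forces `v = γ 0 v = 0`. -/
theorem isUnit_det [DecidableEq ι] (hγ : IsFundamentalSolution B γ) (hB : IsBoundedMeasurable B)
    {t : ℝ} (ht : 0 ≤ t) : IsUnit (γ t).det := by
  rw [isUnit_iff_ne_zero]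
  intro hdet
  obtain ⟨v, hv, hγv⟩ := exists_mulVec_eq_zero_iff.2 hdet
  obtain ⟨K, hK⟩ := hB.exists_norm_mulVec_le
  have hx := eq_zero_of_eq_integral_right (F := fun s v => B s *ᵥ v) (fun s _ => hK s)
    (hγ.continuous_mulVec v).continuousOn
    (fun s _ => by rw [hγ.integral_mulVec_eq_sub hB, hγv, sub_zero]) 0 ⟨le_rfl, ht⟩
  exact hv (by simpa [hγ.apply_zero] using hx)

theorem continuousOn_inv [DecidableEq ι] (hγ : IsFundamentalSolution B γ)
    (hB : IsBoundedMeasurable B) : ContinuousOn (fun t => (γ t)⁻¹) (Ici 0) := fun t ht =>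
  ((continuousAt_matrix_inv _ (by
    rw [Ring.inverse_eq_inv']
    exact continuousAt_inv₀ (hγ.isUnit_det hB ht).ne_zero)).comp
    hγ.continuous.continuousAt).continuousWithinAt

theorem eqOn_of_isIntegralSolutionOn [DecidableEq ι] (hγ : IsFundamentalSolution B γ)
    (hB : IsBoundedMeasurable B) (hτ : 0 ≤ τ) {M : Matrix ι ι ℝ} (hdet : (γ τ - M).det ≠ 0)
    {g u₁ u₂ : ℝ → ι → ℝ} (hg : IntegrableOn g (Icc 0 τ))
    (h₁ : IsIntegralSolutionOn B g τ u₁) (hM₁ : u₁ τ = M *ᵥ u₁ 0)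
    (h₂ : IsIntegralSolutionOn B g τ u₂) (hM₂ : u₂ τ = M *ᵥ u₂ 0) :
    ∀ t ∈ Icc 0 τ, u₁ t = u₂ t := by
  have hdiff := h₁.sub hB h₂ hg hg
  rw [sub_self] at hdiff
  have hγdiff := hγ.eq_mulVec_of_isIntegralSolutionOn hB hdiff
  have h0 : u₁ 0 - u₂ 0 = 0 := by
    by_contra hne
    refine hdet (exists_mulVec_eq_zero_iff.1 ⟨_, hne, ?_⟩)
    have hγτ := hγdiff τ ⟨hτ, le_rfl⟩
    simp only [Pi.sub_apply, hM₁, hM₂] at hγτ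
    rw [sub_mulVec, ← hγτ, mulVec_sub, sub_self]
  intro t ht
  simpa [h0, sub_eq_zero] using hγdiff t ht

theorem integral_mulVec_variationOfConstants [DecidableEq ι] (hγ : IsFundamentalSolution B γ)
    (hB : IsBoundedMeasurable B) {g : ℝ → ι → ℝ} (hg : IntegrableOn g (Icc 0 τ))
    {t : ℝ} (ht : t ∈ Icc 0 τ) :
    ∫ s in (0 : ℝ)..t, B s *ᵥ variationOfConstants γ g s =
      variationOfConstants γ g t - ∫ r in (0 : ℝ)..t, g r := by
  set h := fun r => (γ r)⁻¹ *ᵥ g r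
  have h0 : (0 : ℝ) ∈ Icc 0 t := ⟨le_rfl, ht.1⟩
  have hsub : Icc 0 t ⊆ Icc 0 τ := Icc_subset_Icc le_rfl ht.2
  have hint : IntegrableOn h (Icc 0 t) :=
    (hg.mono_set hsub).continuousOn_mulVec ((hγ.continuousOn_inv hB).mono fun r hr => hr.1)
      isCompact_Icc
  have hγh : ∀ r ∈ Icc 0 t, γ r *ᵥ h r = g r := fun r hr => by
    rw [mulVec_mulVec, mul_nonsing_inv _ (hγ.isUnit_det hB hr.1), one_mulVec]
  have hP : ∀ i j, IntegrableOn (fun s => (B s * γ s) i j) (Icc 0 t) := fun i j =>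
    integrable_pi_iff.1 (hB.integrableOn_mulVec (x := fun s k => γ s k j) isCompact_Icc
      (continuous_pi fun k => hγ.continuous.matrix_elem k j).continuousOn) i
  calc ∫ s in (0 : ℝ)..t, B s *ᵥ variationOfConstants γ g s
      = ∫ s in (0 : ℝ)..t, ∫ r in (0 : ℝ)..s, (B s * γ s) *ᵥ h r := by
        refine integral_congr fun s hs => ?_
        rw [uIcc_of_le ht.1] at hs
        rw [variationOfConstants, mulVec_mulVec]
        exact mulVec_intervalIntegral _ (hint.intervalIntegrable_of_mem_Icc h0 hs)
    _ = ∫ r in (0 : ℝ)..t, ∫ s in r..t, (B s * γ s) *ᵥ h r :=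
        integral_integral_triangle ht.1 (integrableOn_prod_mulVec hP hint)
    _ = ∫ r in (0 : ℝ)..t, (γ t *ᵥ h r - g r) := by
        refine integral_congr fun r hr => ?_
        rw [uIcc_of_le ht.1] at hr
        simp only [← mulVec_mulVec, hγ.integral_mulVec_eq_sub hB, hγh r hr]
    _ = variationOfConstants γ g t - ∫ r in (0 : ℝ)..t, g r := by
        have htt : t ∈ Icc 0 t := ⟨ht.1, le_rfl⟩
        rw [intervalIntegral.integral_sub
            (IntegrableOn.intervalIntegrable_of_mem_Icc
              (hint.continuousOn_mulVec continuousOn_const isCompact_Icc) h0 htt)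
            ((hg.mono_set hsub).intervalIntegrable_of_mem_Icc h0 htt),
          ← mulVec_intervalIntegral _ (hint.intervalIntegrable_of_mem_Icc h0 htt),
          variationOfConstants]

theorem continuousOn_variationOfConstants [DecidableEq ι] (hγ : IsFundamentalSolution B γ)
    (hB : IsBoundedMeasurable B) {g : ℝ → ι → ℝ} (hg : IntegrableOn g (Icc 0 τ)) :
    ContinuousOn (variationOfConstants γ g) (Icc 0 τ) := by
  have hint : IntegrableOn (fun r => (γ r)⁻¹ *ᵥ g r) (Icc 0 τ) :=
    hg.continuousOn_mulVec ((hγ.continuousOn_inv hB).mono fun r hr => hr.1) isCompact_Icc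
  have hprim : ContinuousOn (fun t => ∫ r in (0 : ℝ)..t, (γ r)⁻¹ *ᵥ g r) (Icc 0 τ) := by
    intro t ht
    have hτ : uIcc 0 τ = Icc 0 τ := uIcc_of_le (ht.1.trans ht.2)
    rw [← hτ] at ht hint ⊢
    exact continuousOn_primitive_interval hint t ht
  exact (continuous_fst.matrix_mulVec continuous_snd).comp_continuousOn
    (hγ.continuous.continuousOn.prodMk hprim)

theorem isIntegralSolutionOn_variationOfConstants [DecidableEq ι]
    (hγ : IsFundamentalSolution B γ) (hB : IsBoundedMeasurable B) {g : ℝ → ι → ℝ}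
    (hg : IntegrableOn g (Icc 0 τ)) :
    IsIntegralSolutionOn B (-g) τ (variationOfConstants γ g) := by
  have hcont := hγ.continuousOn_variationOfConstants hB hg
  refine ⟨hcont, fun t ht => ?_⟩
  have h0 : (0 : ℝ) ∈ Icc 0 τ := ⟨le_rfl, ht.1.trans ht.2⟩
  simp only [Pi.neg_apply, sub_neg_eq_add]
  rw [integral_add ((hB.integrableOn_mulVec isCompact_Icc hcont).intervalIntegrable_of_mem_Icc
      h0 ht) (hg.intervalIntegrable_of_mem_Icc h0 ht),
    hγ.integral_mulVec_variationOfConstants hB hg ht, variationOfConstants_zero]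
  abel

theorem exists_isIntegralSolutionOn_of_det_ne_zero [DecidableEq ι]
    (hγ : IsFundamentalSolution B γ) (hB : IsBoundedMeasurable B) {M : Matrix ι ι ℝ}
    (hdet : (γ τ - M).det ≠ 0) {g : ℝ → ι → ℝ} (hg : IntegrableOn g (Icc 0 τ)) :
    ∃ u, IsIntegralSolutionOn B g τ u ∧ u τ = M *ᵥ u 0 := by
  set ξ := (γ τ - M)⁻¹ *ᵥ variationOfConstants γ g τ
  have hsol := (hγ.isIntegralSolutionOn τ ξ).sub hB
    (hγ.isIntegralSolutionOn_variationOfConstants hB hg) integrableOn_zero hg.neg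
  rw [zero_sub, neg_neg] at hsol
  refine ⟨_, hsol, ?_⟩
  have hξ : γ τ *ᵥ ξ - M *ᵥ ξ = variationOfConstants γ g τ := by
    rw [← sub_mulVec, mulVec_mulVec, mul_nonsing_inv _ (isUnit_iff_ne_zero.2 hdet), one_mulVec]
  rw [Pi.sub_apply, Pi.sub_apply, hγ.apply_zero, variationOfConstants_zero, sub_zero, ← hξ]
  abel

end IsFundamentalSolution

end LinearSystem

theorem statement15_general
    (n : ℕ) (τ : ℝ) (hτ : 0 < τ)
    (M : Matrix (Fin n ⊕ Fin n) (Fin n ⊕ Fin n) ℝ)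
    (A : ℝ → Matrix (Fin n ⊕ Fin n) (Fin n ⊕ Fin n) ℝ)
    (hAmeas : ∀ i j, Measurable fun t => A t i j)
    (hAbdd : ∃ C : ℝ, ∀ t i j, |A t i j| ≤ C)
    (γ : ℝ → Matrix (Fin n ⊕ Fin n) (Fin n ⊕ Fin n) ℝ)
    (hγcont : Continuous γ)
    (hγ : ∀ (ξ : (Fin n ⊕ Fin n) → ℝ) (t : ℝ),
      (γ t).mulVec ξ = ξ + ∫ s in (0:ℝ)..t, (Matrix.J (Fin n) ℝ * A s).mulVec ((γ s).mulVec ξ))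
    (hdet : (γ τ - M).det ≠ 0) :
    ∀ w : ℝ → (Fin n ⊕ Fin n) → ℝ, Measurable w →
      MemLp w 2 (volume.restrict (Set.Icc 0 τ)) →
      ∃ u : ℝ → (Fin n ⊕ Fin n) → ℝ,
        (ContinuousOn u (Set.Icc 0 τ) ∧
          (∀ t ∈ Set.Icc (0:ℝ) τ, u t = u 0 + ∫ s in (0:ℝ)..t,
            ((Matrix.J (Fin n) ℝ * A s).mulVec (u s) - (Matrix.J (Fin n) ℝ).mulVec (w s))) ∧
          u τ = M.mulVec (u 0)) ∧
        ∀ u' : ℝ → (Fin n ⊕ Fin n) → ℝ,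
          (ContinuousOn u' (Set.Icc 0 τ) ∧
            (∀ t ∈ Set.Icc (0:ℝ) τ, u' t = u' 0 + ∫ s in (0:ℝ)..t,
              ((Matrix.J (Fin n) ℝ * A s).mulVec (u' s) - (Matrix.J (Fin n) ℝ).mulVec (w s))) ∧
            u' τ = M.mulVec (u' 0)) →
          ∀ t ∈ Set.Icc (0:ℝ) τ, u' t = u t := by
  intro w _ hw
  have hB : IsBoundedMeasurable fun s => J (Fin n) ℝ * A s :=
    IsBoundedMeasurable.const_mul ⟨hAmeas, hAbdd⟩ _
  have hfund : IsFundamentalSolution (fun s => J (Fin n) ℝ * A s) γ := ⟨hγcont, hγ⟩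
  have hg : IntegrableOn (fun s => J (Fin n) ℝ *ᵥ w s) (Icc 0 τ) :=
    IntegrableOn.continuousOn_mulVec continuousOn_const (hw.integrable one_le_two) isCompact_Icc
  obtain ⟨u, hu, huM⟩ := hfund.exists_isIntegralSolutionOn_of_det_ne_zero hB hdet hg
  exact ⟨u, ⟨hu.1, hu.2, huM⟩, fun u' ⟨hu'c, hu'eq, hu'M⟩ =>
    hfund.eqOn_of_isIntegralSolutionOn hB hτ.le hdet hg ⟨hu'c, hu'eq⟩ hu'M hu huM⟩

/-- Let `M ∈ Sp(2n,ℝ)`, `A ∈ L^∞([0,τ]; L_s(ℝ^{2n}))`, `γ_A` the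
fundamental solution of `ẋ = JA(t)x`, and suppose `det(γ_A(τ) − M) ≠ 0`.  Then
`Λ_{M,τ,A} : W^{1,2}_M([0,τ];ℝ^{2n}) → L²([0,τ];ℝ^{2n})`, `u ↦ Ju̇ + Au`, is a Banach
space isomorphism: for every `w ∈ L²` there is a solution `u` of `Ju̇ + Au = w` on `[0,τ]`
(i.e. `u(t) = u(0) + ∫₀ᵗ (JA(s)u(s) − Jw(s)) ds`) with `u(τ) = Mu(0)`, unique on
`[0,τ]`. -/
theorem statement15
    (n : ℕ) (τ : ℝ) (hτ : 0 < τ)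
    (M : Matrix (Fin n ⊕ Fin n) (Fin n ⊕ Fin n) ℝ)
    (hM : M ∈ Matrix.symplecticGroup (Fin n) ℝ)
    (A : ℝ → Matrix (Fin n ⊕ Fin n) (Fin n ⊕ Fin n) ℝ)
    (hAmeas : ∀ i j, Measurable fun t => A t i j)
    (hAsymm : ∀ t, (A t).IsSymm)
    (hAbdd : ∃ C : ℝ, ∀ t i j, |A t i j| ≤ C)
    (γ : ℝ → Matrix (Fin n ⊕ Fin n) (Fin n ⊕ Fin n) ℝ)
    (hγcont : Continuous γ)
    (hγ : ∀ (ξ : (Fin n ⊕ Fin n) → ℝ) (t : ℝ),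
      (γ t).mulVec ξ = ξ + ∫ s in (0:ℝ)..t, (Matrix.J (Fin n) ℝ * A s).mulVec ((γ s).mulVec ξ))
    (hdet : (γ τ - M).det ≠ 0) :
    ∀ w : ℝ → (Fin n ⊕ Fin n) → ℝ, Measurable w →
      MemLp w 2 (volume.restrict (Set.Icc 0 τ)) →
      ∃ u : ℝ → (Fin n ⊕ Fin n) → ℝ,
        (ContinuousOn u (Set.Icc 0 τ) ∧
          (∀ t ∈ Set.Icc (0:ℝ) τ, u t = u 0 + ∫ s in (0:ℝ)..t,
            ((Matrix.J (Fin n) ℝ * A s).mulVec (u s) - (Matrix.J (Fin n) ℝ).mulVec (w s))) ∧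
          u τ = M.mulVec (u 0)) ∧
        ∀ u' : ℝ → (Fin n ⊕ Fin n) → ℝ,
          (ContinuousOn u' (Set.Icc 0 τ) ∧
            (∀ t ∈ Set.Icc (0:ℝ) τ, u' t = u' 0 + ∫ s in (0:ℝ)..t,
              ((Matrix.J (Fin n) ℝ * A s).mulVec (u' s) - (Matrix.J (Fin n) ℝ).mulVec (w s))) ∧
            u' τ = M.mulVec (u' 0)) →
          ∀ t ∈ Set.Icc (0:ℝ) τ, u' t = u t :=
  statement15_general n τ hτ M A hAmeas hAbdd γ hγcont hγ hdet
end
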